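/- Let a, b, c be positive integers with b ≤ a and let x be an integer with b ≤ x ≤ a. Then Σ_{i=a+1−x}^{a+b−x} E(i, x−a+i) = b·c·x/(a+b); equivalently, (a+b) · Σ_T Σ_{i=a+1−x}^{a+b−x} T(i, x−a+i) = b·c·x · N(a,b,c), where the outer sum is over all plane partitions T in the a×b×c box. -/

import Mathlib

open Finset

/-- Plane partitions in an `a × b × c` box: assignments of entries in `{0, …, c}` to the
cells of an `a × b` rectangle with weakly decreasing rows and columns. -/
def PlanePartitions (a b c : ℕ) : Finset (Fin a → Fin b → Fin (c + 1)) :=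
  univ.filter (fun T =>
    (∀ i : Fin a, ∀ j j' : Fin b, j ≤ j' → T i j' ≤ T i j) ∧
    (∀ i i' : Fin a, ∀ j : Fin b, i ≤ i' → T i' j ≤ T i j))

/-- The entry `T(i, j)` of a plane partition at the 1-based cell `(i, j)`. -/
def entry (a b c : ℕ) (T : Fin a → Fin b → Fin (c + 1)) (i j : ℕ) : ℕ :=
  if h : 1 ≤ i ∧ i ≤ a ∧ 1 ≤ j ∧ j ≤ b then
    (T ⟨i - 1, by omega⟩ ⟨j - 1, by omega⟩ : ℕ)
  else 0

/-- `E a b c i j` is the expected value of the entry at the 1-based cell `(i, j)` of a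
uniformly random plane partition in an `a × b × c` box. -/
def E (a b c i j : ℕ) : ℚ :=
  (∑ T ∈ PlanePartitions a b c, (entry a b c T i j : ℚ))
    / ((PlanePartitions a b c).card : ℚ)

/-! Extend a plane partition `T` to `ℤ²` by `c` above and to the left of the box and by `0`
below and to the right of it, and let `D(d)` be the sum of the `b` extended entries on the
diagonal starting at `(d, 1)`. Toggling a cell reflects its entry within the interval allowed by
its neighbours; this involution of the plane partitions negates the toggle defect
`2 T(i,j) - max (lower neighbours) - min (upper neighbours)`, so each defect sums to zero over all
plane partitions. Along a diagonal the defects telescope to the second difference of `D`, hence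
`∑_T D(d)` is affine in `d`. It vanishes on the diagonal just below the box and equals `b c N`
on the diagonal just above it, which gives its value on every diagonal in between. -/

theorem cast_mul_sub_eq_of_add_eq_two_mul {R : Type*} [CommRing R] {u : ℕ → R} {m : ℕ}
    (h : ∀ n, n + 2 ≤ m → u (n + 2) + u n = 2 * u (n + 1)) {n : ℕ} (hn : n ≤ m) :
    (m : R) * (u n - u 0) = n * (u m - u 0) := by
  have linear : ∀ n ≤ m, u n - u 0 = n * (u 1 - u 0) := by
    intro n
    induction n using Nat.twoStepInduction with
    | zero => simp
    | one => simp
    | more n ih₀ ih₁ =>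
      intro hn
      have := h n hn
      rw [show u (n + 2) = 2 * u (n + 1) - u n by linear_combination this]
      have ih₁ := ih₁ (by omega)
      push_cast at ih₁ ⊢
      linear_combination 2 * ih₁ - ih₀ (by omega)
  rw [linear n hn, linear m le_rfl]
  ring

def toggleDefect (f : ℤ → ℤ → ℤ) (i j : ℤ) : ℤ :=
  2 * f i j - max (f (i + 1) j) (f i (j + 1)) - min (f (i - 1) j) (f i (j - 1))

def diagSum (f : ℤ → ℤ → ℤ) (b : ℕ) (d : ℤ) : ℤ :=
  ∑ k ∈ range b, f (d + k) (k + 1)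

theorem sum_toggleDefect_diagonal (f : ℤ → ℤ → ℤ) (b : ℕ) (d : ℤ)
    (h₀ : f (d - 1) 1 ≤ f d 0) (h₁ : f (d + b - 1) (b + 1) ≤ f (d + b) b) :
    ∑ k ∈ range b, toggleDefect f (d + k) (k + 1)
      = 2 * diagSum f b d - diagSum f b (d + 1) - diagSum f b (d - 1) := by
  -- `max x y - x = max (y - x) 0` and `min u v - u = -max (u - v) 0` make the defects telescope
  set g : ℕ → ℤ := fun k => max (f (d + k - 1) (k + 1) - f (d + k) k) 0
  have term : ∀ k : ℕ, toggleDefect f (d + k) (k + 1)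
      = 2 * f (d + k) (k + 1) - f (d + 1 + k) (k + 1) - f (d - 1 + k) (k + 1)
        - (g (k + 1) - g k) := by
    intro k
    simp only [toggleDefect, g, Nat.cast_add, Nat.cast_one]
    rw [show d + (k + 1) - 1 = d + k by ring, show d + 1 + k = d + k + 1 by ring,
      show d - 1 + k = d + k - 1 by ring, show (k : ℤ) + 1 - 1 = k by ring,
      show d + (k + 1) = d + k + 1 by ring]
    omega
  have ends : g b - g 0 = 0 := by simp only [g, Nat.cast_zero, add_zero, zero_add]; omega
  rw [sum_congr rfl fun k _ => term k, sum_sub_distrib, sum_range_sub, ends, diagSum, diagSum,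
    diagSum, mul_sum, ← sum_sub_distrib, ← sum_sub_distrib, sub_zero]

def LocallyAntitone (f : ℤ → ℤ → ℤ) : Prop :=
  ∀ i j, f (i + 1) j ≤ f i j ∧ f i (j + 1) ≤ f i j

namespace LocallyAntitone

variable {f : ℤ → ℤ → ℤ}

theorem sub_toggleDefect_mem_Icc (hf : LocallyAntitone f) (i j : ℤ) :
    f i j - toggleDefect f i j
      ∈ Set.Icc (max (f (i + 1) j) (f i (j + 1))) (min (f (i - 1) j) (f i (j - 1))) := by
  have := hf i j
  have := hf (i - 1) j
  have := hf i (j - 1)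
  simp only [sub_add_cancel] at *
  simp only [toggleDefect, Set.mem_Icc]
  omega

theorem of_eq_off {g : ℤ → ℤ → ℤ} {i₀ j₀ : ℤ} (hf : LocallyAntitone f)
    (hg : ∀ i j, (i, j) ≠ (i₀, j₀) → g i j = f i j)
    (hg₀ : g i₀ j₀ ∈ Set.Icc (max (f (i₀ + 1) j₀) (f i₀ (j₀ + 1)))
      (min (f (i₀ - 1) j₀) (f i₀ (j₀ - 1)))) :
    LocallyAntitone g := by
  obtain ⟨hlo, hhi⟩ := hg₀
  simp only [le_min_iff, max_le_iff] at hlo hhi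
  intro i j
  by_cases hij : (i, j) = (i₀, j₀)
  · obtain ⟨rfl, rfl⟩ := Prod.mk.inj hij
    rw [hg (i + 1) j (by simp), hg i (j + 1) (by simp)]
    exact hlo
  rw [hg i j hij]
  constructor
  · by_cases h : (i + 1, j) = (i₀, j₀)
    · obtain ⟨rfl, rfl⟩ := Prod.mk.inj h
      simpa using hhi.1
    · rw [hg _ _ h]; exact (hf i j).1
  · by_cases h : (i, j + 1) = (i₀, j₀)
    · obtain ⟨rfl, rfl⟩ := Prod.mk.inj h
      simpa using hhi.2
    · rw [hg _ _ h]; exact (hf i j).2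

end LocallyAntitone

namespace PlanePartitions

variable {a b c : ℕ} (T : Fin a → Fin b → Fin (c + 1))

theorem mem_iff : T ∈ PlanePartitions a b c ↔
    (∀ i : Fin a, ∀ j j' : Fin b, j ≤ j' → T i j' ≤ T i j) ∧
      (∀ i i' : Fin a, ∀ j : Fin b, i ≤ i' → T i' j ≤ T i j) := by
  simp [PlanePartitions]

theorem zero_mem : (fun _ _ => 0) ∈ PlanePartitions a b c := by
  simp [mem_iff]

theorem entry_le (i j : ℕ) : entry a b c T i j ≤ c := by
  unfold entry
  split_ifs
  · exact Nat.lt_succ_iff.mp (Fin.is_lt _)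
  · exact Nat.zero_le c

theorem entry_anti {T : Fin a → Fin b → Fin (c + 1)} (hT : T ∈ PlanePartitions a b c)
    {i i' j j' : ℕ} (hi : 1 ≤ i) (hj : 1 ≤ j) (hii' : i ≤ i') (hjj' : j ≤ j') :
    entry a b c T i' j' ≤ entry a b c T i j := by
  obtain ⟨hrow, hcol⟩ := (mem_iff T).mp hT
  unfold entry
  split_ifs with h' h
  · exact (hrow _ _ _ (Fin.mk_le_mk.mpr (by omega))).trans
      (hcol _ _ _ (Fin.mk_le_mk.mpr (by omega)))
  · omega
  · exact Nat.zero_le _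
  · exact le_rfl

def extend (i j : ℤ) : ℤ :=
  if i ≤ 0 ∨ j ≤ 0 then c else entry a b c T i.toNat j.toNat

theorem extend_nonneg (i j : ℤ) : 0 ≤ extend T i j := by
  unfold extend; split_ifs <;> positivity

theorem extend_le (i j : ℤ) : extend T i j ≤ c := by
  unfold extend
  split_ifs
  · exact le_rfl
  · exact_mod_cast entry_le T _ _

theorem extend_of_nonpos_left {i : ℤ} (hi : i ≤ 0) (j : ℤ) : extend T i j = c :=
  if_pos (Or.inl hi)

theorem extend_of_nonpos_right (i : ℤ) {j : ℤ} (hj : j ≤ 0) : extend T i j = c :=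
  if_pos (Or.inr hj)

theorem extend_of_pos {i j : ℤ} (hi : 0 < i) (hj : 0 < j) :
    extend T i j = entry a b c T i.toNat j.toNat :=
  if_neg (by omega)

theorem extend_of_lt_left {i j : ℤ} (hi : a < i) (hj : 0 < j) : extend T i j = 0 := by
  rw [extend_of_pos T (by omega) hj, entry, dif_neg (by omega), Nat.cast_zero]

theorem extend_of_lt_right {i j : ℤ} (hi : 0 < i) (hj : b < j) : extend T i j = 0 := by
  rw [extend_of_pos T hi (by omega), entry, dif_neg (by omega), Nat.cast_zero]

theorem extend_coe_add_one (p : Fin a) (q : Fin b) : extend T (p + 1) (q + 1) = T p q := by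
  rw [extend_of_pos T (by omega) (by omega), entry, dif_pos (by omega)]
  simp

theorem extend_injective :
    Function.Injective (extend : (Fin a → Fin b → Fin (c + 1)) → ℤ → ℤ → ℤ) := by
  intro T T' h
  funext p q
  have := congrFun₂ h (p + 1) (q + 1)
  rw [extend_coe_add_one, extend_coe_add_one] at this
  exact Fin.ext (by exact_mod_cast this)

theorem mem_iff_locallyAntitone :
    T ∈ PlanePartitions a b c ↔ LocallyAntitone (extend T) := by
  constructor
  · intro hT i j
    by_cases h : i ≤ 0 ∨ j ≤ 0
    · rw [show extend T i j = c from if_pos h]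
      exact ⟨extend_le T _ _, extend_le T _ _⟩
    rw [extend_of_pos T (by omega) (by omega), extend_of_pos T (by omega) (by omega),
      extend_of_pos T (by omega) (by omega)]
    exact ⟨by exact_mod_cast entry_anti hT (by omega) (by omega) (by omega) le_rfl,
      by exact_mod_cast entry_anti hT (by omega) (by omega) le_rfl (by omega)⟩
  · intro hT
    refine (mem_iff T).mpr ⟨fun p q q' hqq' => ?_, fun p p' q hpp' => ?_⟩
    · have : extend T (p + 1) (q' + 1) ≤ extend T (p + 1) (q + 1) :=
        antitone_int_of_succ_le (fun j => (hT _ j).2) (by simpa using hqq')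
      rw [extend_coe_add_one, extend_coe_add_one] at this
      exact_mod_cast this
    · have : extend T (p' + 1) (q + 1) ≤ extend T (p + 1) (q + 1) :=
        antitone_int_of_succ_le (f := (extend T · (q + 1))) (fun i => (hT i _).1)
          (by simpa using hpp')
      rw [extend_coe_add_one, extend_coe_add_one] at this
      exact_mod_cast this

/-- The clamp to `c` only serves to land in `Fin (c + 1)`; it is inactive on plane partitions. -/
def toggle (p : Fin a) (q : Fin b) : Fin a → Fin b → Fin (c + 1) :=
  Function.update T p <| Function.update (T p) q
    ⟨min (extend T (p + 1) (q + 1) - toggleDefect (extend T) (p + 1) (q + 1)).toNat c,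
      by omega⟩

variable {T} {p : Fin a} {q : Fin b}

theorem extend_toggle_of_ne {i j : ℤ} (hij : (i, j) ≠ ((p : ℤ) + 1, (q : ℤ) + 1)) :
    extend (toggle T p q) i j = extend T i j := by
  unfold extend entry
  split_ifs with h h'
  · rfl
  · simp only [toggle, Function.update_apply]
    split_ifs with hp
    · subst hp
      rw [Function.update_of_ne]
      intro hq
      simp only [Fin.ext_iff] at hq
      exact hij (Prod.ext (by simp only; omega) (by simp only [← hq]; omega))
    · rfl
  · rfl

theorem extend_toggle_self (hT : T ∈ PlanePartitions a b c) :
    extend (toggle T p q) (p + 1) (q + 1)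
      = extend T (p + 1) (q + 1) - toggleDefect (extend T) (p + 1) (q + 1) := by
  have hmem := ((mem_iff_locallyAntitone T).mp hT).sub_toggleDefect_mem_Icc (p + 1) (q + 1)
  have := extend_nonneg T (p + 1 + 1) (q + 1)
  have := extend_le T (p + 1 - 1) (q + 1)
  rw [extend_coe_add_one]
  simp only [toggle, Function.update_self, Set.mem_Icc, le_min_iff, max_le_iff] at hmem ⊢
  omega

theorem toggle_mem (hT : T ∈ PlanePartitions a b c) : toggle T p q ∈ PlanePartitions a b c := by
  rw [mem_iff_locallyAntitone] at hT ⊢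
  refine hT.of_eq_off (fun i j => extend_toggle_of_ne) ?_
  rw [extend_toggle_self ((mem_iff_locallyAntitone T).mpr hT)]
  exact hT.sub_toggleDefect_mem_Icc _ _

theorem toggleDefect_toggle (hT : T ∈ PlanePartitions a b c) :
    toggleDefect (extend (toggle T p q)) (p + 1) (q + 1)
      = -toggleDefect (extend T) (p + 1) (q + 1) := by
  conv_lhs => unfold toggleDefect
  rw [extend_toggle_self hT, extend_toggle_of_ne (by simp), extend_toggle_of_ne (by simp),
    extend_toggle_of_ne (by simp), extend_toggle_of_ne (by simp)]
  unfold toggleDefect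
  ring

theorem toggle_toggle (hT : T ∈ PlanePartitions a b c) : toggle (toggle T p q) p q = T := by
  refine extend_injective (funext₂ fun i j => ?_)
  by_cases hij : (i, j) = ((p : ℤ) + 1, (q : ℤ) + 1)
  · obtain ⟨rfl, rfl⟩ := Prod.mk.inj hij
    rw [extend_toggle_self (toggle_mem hT), toggleDefect_toggle hT, extend_toggle_self hT]
    ring
  · rw [extend_toggle_of_ne hij, extend_toggle_of_ne hij]

theorem sum_toggleDefect_eq_zero (p : Fin a) (q : Fin b) :
    ∑ T ∈ PlanePartitions a b c, toggleDefect (extend T) (p + 1) (q + 1) = 0 := by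
  refine sum_involution (fun T _ => toggle T p q) (fun T hT => ?_) (fun T hT hne hfix => ?_)
    (fun T hT => toggle_mem hT) (fun T hT => toggle_toggle hT)
  · rw [toggleDefect_toggle hT, add_neg_cancel]
  · have := extend_toggle_self (p := p) (q := q) hT
    rw [hfix] at this
    exact hne (by linarith)

variable (T)

theorem toggleDefect_extend_of_nonpos {i : ℤ} (hi : i ≤ 0) (j : ℤ) :
    toggleDefect (extend T) i j = 0 := by
  have := extend_le T (i + 1) j
  simp only [toggleDefect, extend_of_nonpos_left T hi,
    extend_of_nonpos_left T (by omega : i - 1 ≤ 0)]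
  omega

theorem toggleDefect_extend_of_lt {i j : ℤ} (hi : a < i) (hj : 2 ≤ j) :
    toggleDefect (extend T) i j = 0 := by
  have := extend_nonneg T (i - 1) j
  simp only [toggleDefect, extend_of_lt_left T hi (by omega : 0 < j),
    extend_of_lt_left T (by omega : a < i + 1) (by omega : 0 < j),
    extend_of_lt_left T hi (by omega : 0 < j + 1), extend_of_lt_left T hi (by omega : 0 < j - 1)]
  omega

theorem sum_sum_toggleDefect_diagonal {d : ℤ} (hd : d ≤ a) :
    ∑ T ∈ PlanePartitions a b c, ∑ k ∈ range b, toggleDefect (extend T) (d + k) (k + 1) = 0 := by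
  rw [sum_comm]
  refine sum_eq_zero fun k hk => ?_
  rw [mem_range] at hk
  rcases le_or_gt (d + k) 0 with hpos | hpos
  · exact sum_eq_zero fun T _ => toggleDefect_extend_of_nonpos T hpos _
  rcases le_or_gt (d + k) a with hle | hlt
  · have := sum_toggleDefect_eq_zero (a := a) (c := c) ⟨(d + k - 1).toNat, by omega⟩ ⟨k, hk⟩
    rwa [show (((d + k - 1).toNat : ℕ) : ℤ) + 1 = d + k by omega] at this
  · exact sum_eq_zero fun T _ => toggleDefect_extend_of_lt T hlt (by omega)

theorem diagSum_extend_of_lt {d : ℤ} (hd : a < d) : diagSum (extend T) b d = 0 :=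
  sum_eq_zero fun k _ => extend_of_lt_left T (by omega) (by omega)

theorem diagSum_extend_of_add_le_one {d : ℤ} (hd : d + b ≤ 1) :
    diagSum (extend T) b d = b * c := by
  rw [diagSum, sum_congr rfl fun k hk => extend_of_nonpos_left T (by rw [mem_range] at hk; omega) _]
  simp

theorem sum_diagSum_sub_one_add_sum_diagSum_add_one {d : ℤ} (hd : d ≤ a) (hdb : 2 ≤ d + b) :
    ∑ T ∈ PlanePartitions a b c, diagSum (extend T) b (d - 1)
      + ∑ T ∈ PlanePartitions a b c, diagSum (extend T) b (d + 1)
      = 2 * ∑ T ∈ PlanePartitions a b c, diagSum (extend T) b d := by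
  have hsum := sum_sum_toggleDefect_diagonal (b := b) (c := c) hd
  rw [sum_congr rfl fun T _ => sum_toggleDefect_diagonal _ _ _
    (by rw [extend_of_nonpos_right T _ le_rfl]; exact extend_le T _ _)
    (by rw [extend_of_lt_right T (by omega) (by omega)]; exact extend_nonneg T _ _),
    sum_sub_distrib, sum_sub_distrib, ← mul_sum] at hsum
  linarith

theorem add_mul_sum_diagSum {x : ℕ} (hx : x ≤ a + b) :
    ((a : ℤ) + b) * ∑ T ∈ PlanePartitions a b c, diagSum (extend T) b (a + 1 - x)
      = x * (b * c * #(PlanePartitions a b c)) := by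
  have step : ∀ n, n + 2 ≤ a + b →
      ∑ T ∈ PlanePartitions a b c, diagSum (extend T) b (a + 1 - (n + 2 : ℕ))
        + ∑ T ∈ PlanePartitions a b c, diagSum (extend T) b (a + 1 - n)
      = 2 * ∑ T ∈ PlanePartitions a b c, diagSum (extend T) b (a + 1 - (n + 1 : ℕ)) := by
    intro n hn
    have := sum_diagSum_sub_one_add_sum_diagSum_add_one (a := a) (b := b) (c := c) (d := a - n)
      (by omega) (by omega)
    push_cast
    rwa [show (a : ℤ) + 1 - (n + 1) = a - n by ring,
      show (a : ℤ) + 1 - (n + 2) = a - n - 1 by ring, show (a : ℤ) + 1 - n = a - n + 1 by ring]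
  have bottom : ∑ T ∈ PlanePartitions a b c, diagSum (extend T) b (a + 1 - (0 : ℕ)) = 0 :=
    sum_eq_zero fun T _ => diagSum_extend_of_lt T (by omega)
  have top : ∑ T ∈ PlanePartitions a b c, diagSum (extend T) b (a + 1 - (a + b : ℕ))
      = b * c * #(PlanePartitions a b c) := by
    rw [sum_congr rfl fun T _ => diagSum_extend_of_add_le_one T (by omega), sum_const,
      nsmul_eq_mul]
    ring
  have := cast_mul_sub_eq_of_add_eq_two_mul
    (u := fun n => ∑ T ∈ PlanePartitions a b c, diagSum (extend T) b (a + 1 - n)) step hx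
  rw [bottom, top] at this
  push_cast at this
  linear_combination this

theorem diagSum_extend_eq_sum_entry {x : ℕ} (hx : x ≤ a) :
    diagSum (extend T) b (a + 1 - x)
      = ∑ i ∈ Icc (a + 1 - x) (a + b - x), (entry a b c T i (x + i - a) : ℤ) := by
  rw [← Ico_add_one_right_eq_Icc, sum_Ico_eq_sum_range,
    show a + b - x + 1 - (a + 1 - x) = b by omega]
  refine sum_congr rfl fun k _ => ?_
  rw [extend_of_pos T (by omega) (by omega), show x + (a + 1 - x + k) - a = k + 1 by omega]
  congr; omega

end PlanePartitions

theorem diagonal_expected_sum_middle_b_le_a_general (a b c : ℕ) (hb : 0 < b) (x : ℕ) (hx2 : x ≤ a) :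
    ∑ i ∈ Finset.Icc (a + 1 - x) (a + b - x), E a b c i (x + i - a)
      = (b : ℚ) * c * x / ((a : ℚ) + b) := by
  have hN : (#(PlanePartitions a b c) : ℚ) ≠ 0 :=
    Nat.cast_ne_zero.mpr (card_ne_zero.mpr ⟨_, PlanePartitions.zero_mem⟩)
  have hsum : ∑ i ∈ Icc (a + 1 - x) (a + b - x), E a b c i (x + i - a)
      = ((∑ T ∈ PlanePartitions a b c, diagSum (PlanePartitions.extend T) b (a + 1 - x) : ℤ) : ℚ)
        / #(PlanePartitions a b c) := by
    simp only [E, ← sum_div, PlanePartitions.diagSum_extend_eq_sum_entry _ hx2]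
    push_cast
    rw [sum_comm]
  have key : ((a : ℚ) + b)
      * ((∑ T ∈ PlanePartitions a b c, diagSum (PlanePartitions.extend T) b (a + 1 - x) : ℤ) : ℚ)
      = x * (b * c * #(PlanePartitions a b c)) := by
    exact_mod_cast PlanePartitions.add_mul_sum_diagSum (show x ≤ a + b by omega)
  rw [hsum, div_eq_div_iff hN (by positivity)]
  linear_combination key

theorem diagonal_expected_sum_middle_b_le_a (a b c : ℕ) (ha : 0 < a) (hb : 0 < b)
    (hc : 0 < c) (hab : b ≤ a) (x : ℕ) (hx1 : b ≤ x) (hx2 : x ≤ a) :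
    ∑ i ∈ Finset.Icc (a + 1 - x) (a + b - x), E a b c i (x + i - a)
      = (b : ℚ) * c * x / ((a : ℚ) + b) :=
  diagonal_expected_sum_middle_b_le_a_general a b c hb x hx2
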